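/- arXiv:2411.05916 — 3 statements merged into one kernel-verified Lean document; each statement's English description precedes it below -/
import Mathlib

section
/- Commutator of two long-root matrices, interacting case: let 1 ≤ i, j, k ≤ n and signs a, b, c ∈ {+1,−1} satisfy i ≠ j, k ≠ j, and ai ≠ −ck. Then for all t, u ∈ F, one has L^{a,b}_{i,j}(t) · L^{c,−b}_{k,j}(u) · L^{a,b}_{i,j}(−t) · L^{c,−b}_{k,j}(−u) = I − actu·E_{ai,−ck} + actu·E_{ck,−ai}; when additionally i ≠ k, this matrix is the long-root matrix L^{a,c}_{i,k}(−ctu). -/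
open Matrix

/-- Index set `{-n, …, n}` for (2n+1)×(2n+1) matrices. -/
abbrev BIdx (n : ℕ) : Type := {z : ℤ // z ∈ Finset.Icc (-(n : ℤ)) (n : ℤ)}

/-- `Eb F n p q` : the matrix with a 1 in entry (p,q) and 0 elsewhere
(rows and columns indexed by `{-n, …, n}`). -/
def Eb (F : Type*) [Field F] (n : ℕ) (p q : ℤ) : Matrix (BIdx n) (BIdx n) F :=
  Matrix.of fun r c => if ((r : ℤ) = p ∧ (c : ℤ) = q) then 1 else 0

/-- Short-root matrix `S^a_i(t) := I + 2at·E_{ai,0} − at·E_{0,−ai} − t²·E_{ai,−ai}`. -/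
def Sb (F : Type*) [Field F] (n : ℕ) (a i : ℤ) (t : F) : Matrix (BIdx n) (BIdx n) F :=
  1 + (2 * (a : F) * t) • Eb F n (a * i) 0 - ((a : F) * t) • Eb F n 0 (-(a * i))
    - t ^ 2 • Eb F n (a * i) (-(a * i))

/-- Long-root matrix `L^{a,b}_{i,j}(t) := I + at·E_{ai,−bj} − at·E_{bj,−ai}`. -/
def Lb (F : Type*) [Field F] (n : ℕ) (a b i j : ℤ) (t : F) : Matrix (BIdx n) (BIdx n) F :=
  1 + ((a : F) * t) • Eb F n (a * i) (-(b * j)) - ((a : F) * t) • Eb F n (b * j) (-(a * i))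


lemma Eb_mul_ne (F : Type*) [Field F] (n : ℕ) (p q r s : ℤ) (h : q ≠ r) :
    Eb F n p q * Eb F n r s = 0 := by
  ext x y
  simp only [Eb, Matrix.mul_apply, Matrix.of_apply, Matrix.zero_apply]
  refine Finset.sum_eq_zero fun z _ => ?_
  by_cases h1 : (z : ℤ) = q <;> by_cases h2 : (z : ℤ) = r <;> simp_all
lemma Eb_mul_eq (F : Type*) [Field F] (n : ℕ) (p q s : ℤ)
    (h1 : -(n : ℤ) ≤ q) (h2 : q ≤ (n : ℤ)) :
    Eb F n p q * Eb F n q s = Eb F n p s := by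
  ext x y
  simp only [Eb, Matrix.mul_apply, Matrix.of_apply]
  rw [Finset.sum_eq_single (⟨q, by simp [h1, h2]⟩ : BIdx n)]
  · by_cases hx : (x : ℤ) = p <;> by_cases hy : (y : ℤ) = s <;> simp [hx, hy]
  · intro z _ hz
    have : (z : ℤ) ≠ q := fun hzq => hz (Subtype.ext hzq)
    simp [this]
  · simp

lemma comm_aux (F : Type*) [Field F] (n : ℕ) (x y z : ℤ)
    (hy1 : -(n : ℤ) ≤ y) (hy2 : y ≤ (n : ℤ))
    (hxy : x ≠ y) (hxy' : x ≠ -y) (hzy : z ≠ y) (hzy' : z ≠ -y) (hxz : x ≠ -z)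
    (hy0 : y ≠ 0) (hx0 : x ≠ 0) (hz0 : z ≠ 0) (α β : F) :
    (1 + α • Eb F n x (-y) - α • Eb F n y (-x)) *
      (1 + β • Eb F n z y - β • Eb F n (-y) (-z)) *
      (1 - α • Eb F n x (-y) + α • Eb F n y (-x)) *
      (1 - β • Eb F n z y + β • Eb F n (-y) (-z)) =
    1 - (α * β) • Eb F n x (-z) + (α * β) • Eb F n z (-x) := by
  have h11 : Eb F n x (-y) * Eb F n x (-y) = 0 := Eb_mul_ne _ _ _ _ _ _ (by omega)
  have h12 : Eb F n x (-y) * Eb F n y (-x) = 0 := Eb_mul_ne _ _ _ _ _ _ (by omega)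
  have h13 : Eb F n x (-y) * Eb F n z y = 0 := Eb_mul_ne _ _ _ _ _ _ (by omega)
  have h14 : Eb F n x (-y) * Eb F n (-y) (-z) = Eb F n x (-z) :=
    Eb_mul_eq _ _ _ _ _ (by omega) (by omega)
  have h15 : Eb F n x (-y) * Eb F n x (-z) = 0 := Eb_mul_ne _ _ _ _ _ _ (by omega)
  have h16 : Eb F n x (-y) * Eb F n z (-x) = 0 := Eb_mul_ne _ _ _ _ _ _ (by omega)
  have h21 : Eb F n y (-x) * Eb F n x (-y) = 0 := Eb_mul_ne _ _ _ _ _ _ (by omega)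
  have h22 : Eb F n y (-x) * Eb F n y (-x) = 0 := Eb_mul_ne _ _ _ _ _ _ (by omega)
  have h23 : Eb F n y (-x) * Eb F n z y = 0 := Eb_mul_ne _ _ _ _ _ _ (by omega)
  have h24 : Eb F n y (-x) * Eb F n (-y) (-z) = 0 := Eb_mul_ne _ _ _ _ _ _ (by omega)
  have h25 : Eb F n y (-x) * Eb F n x (-z) = 0 := Eb_mul_ne _ _ _ _ _ _ (by omega)
  have h26 : Eb F n y (-x) * Eb F n z (-x) = 0 := Eb_mul_ne _ _ _ _ _ _ (by omega)
  have h31 : Eb F n z y * Eb F n x (-y) = 0 := Eb_mul_ne _ _ _ _ _ _ (by omega)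
  have h32 : Eb F n z y * Eb F n y (-x) = Eb F n z (-x) :=
    Eb_mul_eq _ _ _ _ _ (by omega) (by omega)
  have h33 : Eb F n z y * Eb F n z y = 0 := Eb_mul_ne _ _ _ _ _ _ (by omega)
  have h34 : Eb F n z y * Eb F n (-y) (-z) = 0 := Eb_mul_ne _ _ _ _ _ _ (by omega)
  have h35 : Eb F n z y * Eb F n x (-z) = 0 := Eb_mul_ne _ _ _ _ _ _ (by omega)
  have h36 : Eb F n z y * Eb F n z (-x) = 0 := Eb_mul_ne _ _ _ _ _ _ (by omega)
  have h41 : Eb F n (-y) (-z) * Eb F n x (-y) = 0 := Eb_mul_ne _ _ _ _ _ _ (by omega)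
  have h42 : Eb F n (-y) (-z) * Eb F n y (-x) = 0 := Eb_mul_ne _ _ _ _ _ _ (by omega)
  have h43 : Eb F n (-y) (-z) * Eb F n z y = 0 := Eb_mul_ne _ _ _ _ _ _ (by omega)
  have h44 : Eb F n (-y) (-z) * Eb F n (-y) (-z) = 0 := Eb_mul_ne _ _ _ _ _ _ (by omega)
  have h45 : Eb F n (-y) (-z) * Eb F n x (-z) = 0 := Eb_mul_ne _ _ _ _ _ _ (by omega)
  have h46 : Eb F n (-y) (-z) * Eb F n z (-x) = 0 := Eb_mul_ne _ _ _ _ _ _ (by omega)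
  have h51 : Eb F n x (-z) * Eb F n x (-y) = 0 := Eb_mul_ne _ _ _ _ _ _ (by omega)
  have h52 : Eb F n x (-z) * Eb F n y (-x) = 0 := Eb_mul_ne _ _ _ _ _ _ (by omega)
  have h53 : Eb F n x (-z) * Eb F n z y = 0 := Eb_mul_ne _ _ _ _ _ _ (by omega)
  have h54 : Eb F n x (-z) * Eb F n (-y) (-z) = 0 := Eb_mul_ne _ _ _ _ _ _ (by omega)
  have h55 : Eb F n x (-z) * Eb F n x (-z) = 0 := Eb_mul_ne _ _ _ _ _ _ (by omega)
  have h56 : Eb F n x (-z) * Eb F n z (-x) = 0 := Eb_mul_ne _ _ _ _ _ _ (by omega)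
  have h61 : Eb F n z (-x) * Eb F n x (-y) = 0 := Eb_mul_ne _ _ _ _ _ _ (by omega)
  have h62 : Eb F n z (-x) * Eb F n y (-x) = 0 := Eb_mul_ne _ _ _ _ _ _ (by omega)
  have h63 : Eb F n z (-x) * Eb F n z y = 0 := Eb_mul_ne _ _ _ _ _ _ (by omega)
  have h64 : Eb F n z (-x) * Eb F n (-y) (-z) = 0 := Eb_mul_ne _ _ _ _ _ _ (by omega)
  have h65 : Eb F n z (-x) * Eb F n x (-z) = 0 := Eb_mul_ne _ _ _ _ _ _ (by omega)
  have h66 : Eb F n z (-x) * Eb F n z (-x) = 0 := Eb_mul_ne _ _ _ _ _ _ (by omega)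
  simp only [mul_add, add_mul, mul_sub, sub_mul, one_mul, mul_one,
    smul_mul_assoc, mul_smul_comm, smul_smul, mul_assoc,
    h11, h12, h13, h14, h15, h16, h21, h22, h23, h24, h25, h26,
    h31, h32, h33, h34, h35, h36, h41, h42, h43, h44, h45, h46, h51, h52, h53, h54, h55, h56, h61, h62, h63, h64, h65, h66,
    smul_zero, mul_zero, zero_mul, add_zero, zero_add, sub_zero, zero_sub]
  module

/-- Commutator of two long-root matrices, interacting case: for `i ≠ j`, `k ≠ j`,
`ai ≠ −ck`,
`L^{a,b}_{i,j}(t) · L^{c,−b}_{k,j}(u) · L^{a,b}_{i,j}(−t) · L^{c,−b}_{k,j}(−u)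
  = I − actu·E_{ai,−ck} + actu·E_{ck,−ai}`;
when additionally `i ≠ k`, this matrix is the long-root matrix `L^{a,c}_{i,k}(−ctu)`. -/
theorem typeB_long_long_commutator (F : Type*) [Field F] (n : ℕ) (hn : 1 ≤ n)
    (a b c : ℤ) (ha : a = 1 ∨ a = -1) (hb : b = 1 ∨ b = -1) (hc : c = 1 ∨ c = -1)
    (i j k : ℤ) (hi1 : 1 ≤ i) (hin : i ≤ (n : ℤ)) (hj1 : 1 ≤ j) (hjn : j ≤ (n : ℤ))
    (hk1 : 1 ≤ k) (hkn : k ≤ (n : ℤ))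
    (hij : i ≠ j) (hkj : k ≠ j) (hik : a * i ≠ -(c * k))
    (t u : F) :
    Lb F n a b i j t * Lb F n c (-b) k j u * Lb F n a b i j (-t) * Lb F n c (-b) k j (-u)
        = 1 - ((a : F) * (c : F) * t * u) • Eb F n (a * i) (-(c * k))
            + ((a : F) * (c : F) * t * u) • Eb F n (c * k) (-(a * i)) ∧
    (i ≠ k →
      Lb F n a b i j t * Lb F n c (-b) k j u * Lb F n a b i j (-t) * Lb F n c (-b) k j (-u)
        = Lb F n a c i k (-((c : F) * t * u))) := by
  have L1 : Lb F n a b i j t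
      = 1 + ((a : F) * t) • Eb F n (a * i) (-(b * j))
          - ((a : F) * t) • Eb F n (b * j) (-(a * i)) := rfl
  have L1' : Lb F n a b i j (-t)
      = 1 - ((a : F) * t) • Eb F n (a * i) (-(b * j))
          + ((a : F) * t) • Eb F n (b * j) (-(a * i)) := by
    rw [Lb]; module
  have L2 : Lb F n c (-b) k j u
      = 1 + ((c : F) * u) • Eb F n (c * k) (b * j)
          - ((c : F) * u) • Eb F n (-(b * j)) (-(c * k)) := by
    rw [Lb]; rw [show -(-b * j) = b * j by ring, show -b * j = -(b * j) by ring]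
  have L2' : Lb F n c (-b) k j (-u)
      = 1 - ((c : F) * u) • Eb F n (c * k) (b * j)
          + ((c : F) * u) • Eb F n (-(b * j)) (-(c * k)) := by
    rw [Lb]; rw [show -(-b * j) = b * j by ring, show -b * j = -(b * j) by ring]; module
  have key := comm_aux F n (a * i) (b * j) (c * k)
    (by rcases hb with rfl | rfl <;> omega) (by rcases hb with rfl | rfl <;> omega)
    (by rcases ha with rfl | rfl <;> rcases hb with rfl | rfl <;> omega)
    (by rcases ha with rfl | rfl <;> rcases hb with rfl | rfl <;> omega)
    (by rcases hc with rfl | rfl <;> rcases hb with rfl | rfl <;> omega)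
    (by rcases hc with rfl | rfl <;> rcases hb with rfl | rfl <;> omega)
    hik
    (by rcases hb with rfl | rfl <;> omega)
    (by rcases ha with rfl | rfl <;> omega)
    (by rcases hc with rfl | rfl <;> omega)
    ((a : F) * t) ((c : F) * u)
  have main : Lb F n a b i j t * Lb F n c (-b) k j u * Lb F n a b i j (-t)
        * Lb F n c (-b) k j (-u)
      = 1 - ((a : F) * (c : F) * t * u) • Eb F n (a * i) (-(c * k))
          + ((a : F) * (c : F) * t * u) • Eb F n (c * k) (-(a * i)) := by
    rw [L1, L1', L2, L2', key]; module
  refine ⟨main, fun _ => ?_⟩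
  rw [main, Lb]; module
end

section
/- Commutator of a long- and a short-root matrix, interacting case: let 1 ≤ i, j ≤ n with i ≠ j and let a, b ∈ {+1,−1}. Then for all t, u ∈ F, one has L^{a,b}_{i,j}(t) · S^{−a}_i(u) · L^{a,b}_{i,j}(−t) · S^{−a}_i(−u) = I + atu²·E_{−ai,−bj} − atu²·E_{bj,ai} + 2tu·E_{bj,0} − tu·E_{0,−bj} − t²u²·E_{bj,−bj}; moreover this matrix equals the product L^{−a,b}_{i,j}(−tu²) · S^b_j(btu). -/
open Matrix

lemma Eb_mul_Eb (F : Type*) [Field F] (n : ℕ) (p q r s : ℤ) :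
    Eb F n p q * Eb F n r s =
      if q = r ∧ q ∈ Finset.Icc (-(n : ℤ)) (n : ℤ) then Eb F n p s else 0 := by
  ext x y
  simp only [Matrix.mul_apply, Eb, Matrix.of_apply]
  by_cases hqr : q = r ∧ q ∈ Finset.Icc (-(n : ℤ)) (n : ℤ)
  · obtain ⟨rfl, hq⟩ := hqr
    rw [if_pos ⟨rfl, hq⟩, Fintype.sum_eq_single (⟨q, hq⟩ : BIdx n)]
    · by_cases hx : (x : ℤ) = p <;> by_cases hy : (y : ℤ) = s <;> simp [hx, hy]
    · intro k hk
      have : (k : ℤ) ≠ q := fun h => hk (Subtype.ext h)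
      simp [this]
  · rw [if_neg hqr]
    simp only [Matrix.zero_apply]
    refine Finset.sum_eq_zero fun k _ => ?_
    by_cases h1 : (k : ℤ) = q
    · have : (k : ℤ) ≠ r := fun h2 => hqr ⟨h1 ▸ h2, h1 ▸ k.2⟩
      simp [this]
    · simp [h1]


set_option maxHeartbeats 1600000 in
/-- Commutator of a long- and a short-root matrix, interacting case: for `i ≠ j`,
`L^{a,b}_{i,j}(t) · S^{−a}_i(u) · L^{a,b}_{i,j}(−t) · S^{−a}_i(−u)
  = I + atu²·E_{−ai,−bj} − atu²·E_{bj,ai} + 2tu·E_{bj,0} − tu·E_{0,−bj} − t²u²·E_{bj,−bj}`;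
moreover this matrix equals the product `L^{−a,b}_{i,j}(−tu²) · S^b_j(btu)`. -/
theorem typeB_long_short_commutator (F : Type*) [Field F] (n : ℕ) (hn : 1 ≤ n)
    (a b : ℤ) (ha : a = 1 ∨ a = -1) (hb : b = 1 ∨ b = -1)
    (i j : ℤ) (hi1 : 1 ≤ i) (hin : i ≤ (n : ℤ)) (hj1 : 1 ≤ j) (hjn : j ≤ (n : ℤ))
    (hij : i ≠ j) (t u : F) :
    Lb F n a b i j t * Sb F n (-a) i u * Lb F n a b i j (-t) * Sb F n (-a) i (-u)
        = 1 + ((a : F) * t * u ^ 2) • Eb F n (-(a * i)) (-(b * j))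
            - ((a : F) * t * u ^ 2) • Eb F n (b * j) (a * i)
            + (2 * t * u) • Eb F n (b * j) 0
            - (t * u) • Eb F n 0 (-(b * j))
            - (t ^ 2 * u ^ 2) • Eb F n (b * j) (-(b * j)) ∧
    Lb F n a b i j t * Sb F n (-a) i u * Lb F n a b i j (-t) * Sb F n (-a) i (-u)
        = Lb F n (-a) b i j (-(t * u ^ 2)) * Sb F n b j ((b : F) * t * u) := by
  have hmi : i ∈ Finset.Icc (-(n : ℤ)) (n : ℤ) := by simp only [Finset.mem_Icc]; omega
  have hmni : -i ∈ Finset.Icc (-(n : ℤ)) (n : ℤ) := by simp only [Finset.mem_Icc]; omega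
  have hmj : j ∈ Finset.Icc (-(n : ℤ)) (n : ℤ) := by simp only [Finset.mem_Icc]; omega
  have hmnj : -j ∈ Finset.Icc (-(n : ℤ)) (n : ℤ) := by simp only [Finset.mem_Icc]; omega
  have hm0 : (0:ℤ) ∈ Finset.Icc (-(n : ℤ)) (n : ℤ) := by simp only [Finset.mem_Icc]; omega
  have e1 : i ≠ j := hij
  have e2 : j ≠ i := by omega
  have e3 : i ≠ -j := by omega
  have e4 : -j ≠ i := by omega
  have e5 : -i ≠ j := by omega
  have e6 : j ≠ -i := by omega
  have e7 : -i ≠ -j := by omega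
  have e8 : -j ≠ -i := by omega
  have e9 : i ≠ 0 := by omega
  have e10 : (0:ℤ) ≠ i := by omega
  have e11 : j ≠ 0 := by omega
  have e12 : (0:ℤ) ≠ j := by omega
  have e13 : -i ≠ 0 := by omega
  have e14 : (0:ℤ) ≠ -i := by omega
  have e15 : -j ≠ 0 := by omega
  have e16 : (0:ℤ) ≠ -j := by omega
  have e17 : i ≠ -i := by omega
  have e18 : -i ≠ i := by omega
  have e19 : j ≠ -j := by omega
  have e20 : -j ≠ j := by omega
  obtain rfl | rfl := ha <;> obtain rfl | rfl := hb <;>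
    constructor <;>
    (simp only [Lb, Sb, one_mul, neg_mul, mul_neg, neg_neg, neg_sq, Int.cast_one, Int.cast_neg,
      mul_add, add_mul, mul_sub, sub_mul, Matrix.mul_one, Matrix.one_mul,
      smul_mul_assoc, mul_smul_comm, smul_smul, neg_smul, smul_neg, Eb_mul_Eb,
      e1, e2, e3, e4, e5, e6, e7, e8, e9, e10, e11, e12, e13, e14, e15, e16, e17, e18, e19, e20,
      hmi, hmni, hmj, hmnj, hm0,
      and_true, and_false, false_and, true_and, ite_true, ite_false, if_true, if_false,
      smul_zero, zero_smul, mul_zero, zero_mul, add_zero, zero_add, sub_zero, zero_sub, neg_zero]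
     module)
end

section
/- For all 1 ≤ i, j ≤ n with i ≠ j, all signs a, b ∈ {+1,−1}, and every nonzero t ∈ F, one has g_{ai,bj}(t) = I + at·E_{ai,−bj} − at·E_{bj,−ai} + at⁻¹·E_{−ai,bj} − at⁻¹·E_{−bj,ai} − E_{ai,ai} − E_{bj,bj} − E_{−bj,−bj} − E_{−ai,−ai}. -/
open Matrix

/-- `g_{ai,bj}(t) := L^{a,b}_{i,j}(t) · L^{−a,−b}_{i,j}(−t⁻¹) · L^{a,b}_{i,j}(t)`. -/
noncomputable def gB (F : Type*) [Field F] (n : ℕ) (a b i j : ℤ) (t : F) : Matrix (BIdx n) (BIdx n) F :=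
  Lb F n a b i j t * Lb F n (-a) (-b) i j (-t⁻¹) * Lb F n a b i j t

/-! The product is a Weyl element of the `SL₂` attached to the long root: with
`X = E_{ai,−bj} − E_{bj,−ai}` and `Y = E_{−ai,bj} − E_{−bj,ai}` one has `X² = 0` and `XYX = −X`,
and these two relations alone give `(1 + cX)(1 + c⁻¹Y)(1 + cX) = 1 + cX + c⁻¹Y + XY + YX`.
Here `c = at`, and `c⁻¹ = at⁻¹` because `a = ±1`. Since `ai, bj, −ai, −bj` are four distinct
indices, `XY + YX` is minus the sum of the four diagonal matrix units. -/

theorem one_add_mul_one_add_mul_one_add_of_mul_self_eq_zero {R : Type*} [Ring R] {X Y : R}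
    (hXX : X * X = 0) (hXYX : X * Y * X = -X) :
    (1 + X) * (1 + Y) * (1 + X) = 1 + X + Y + (X * Y + Y * X) := by
  calc (1 + X) * (1 + Y) * (1 + X) = 1 + X + Y + (X * Y + Y * X) + X * X + (X * Y * X + X) := by
        noncomm_ring
    _ = 1 + X + Y + (X * Y + Y * X) := by rw [hXX, hXYX, neg_add_cancel, add_zero, add_zero]

section MatrixUnits

variable (F : Type*) [Field F] (n : ℕ)

theorem Eb_mul_Eb_of_ne {p q r s : ℤ} (h : q ≠ r) : Eb F n p q * Eb F n r s = 0 := by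
  ext x y
  simp only [Eb, mul_apply, of_apply, Matrix.zero_apply]
  refine Finset.sum_eq_zero fun k _ => ?_
  split_ifs <;> simp_all

theorem Eb_mul_Eb_self {p q s : ℤ} (hq : q.natAbs ≤ n) : Eb F n p q * Eb F n q s = Eb F n p s := by
  have hq' : q ∈ Finset.Icc (-(n : ℤ)) n := Finset.mem_Icc.2 ⟨by omega, by omega⟩
  ext x y
  simp only [Eb, mul_apply, of_apply]
  rw [Finset.sum_eq_single (⟨q, hq'⟩ : BIdx n)]
  · split_ifs <;> simp_all
  · intro k _ hk
    rw [if_neg fun h => hk (Subtype.ext h.2), zero_mul]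
  · simp

def longRootNil (p q : ℤ) : Matrix (BIdx n) (BIdx n) F :=
  Eb F n p (-q) - Eb F n q (-p)

variable {F n} {p q : ℤ}

theorem longRootNil_mul_self (hp : p ≠ 0) (hq : q ≠ 0) (hpq : p.natAbs ≠ q.natAbs) :
    longRootNil F n p q * longRootNil F n p q = 0 := by
  simp only [longRootNil, mul_sub, sub_mul]
  rw [Eb_mul_Eb_of_ne F n (by omega), Eb_mul_Eb_of_ne F n (by omega),
    Eb_mul_Eb_of_ne F n (by omega), Eb_mul_Eb_of_ne F n (by omega)]
  simp

theorem longRootNil_mul_neg (hpq : p.natAbs ≠ q.natAbs) (hpn : p.natAbs ≤ n)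
    (hqn : q.natAbs ≤ n) :
    longRootNil F n p q * longRootNil F n (-p) (-q) = -(Eb F n p p + Eb F n q q) := by
  simp only [longRootNil, neg_neg, mul_sub, sub_mul]
  rw [Eb_mul_Eb_of_ne F n (by omega), Eb_mul_Eb_self F n (by omega),
    Eb_mul_Eb_self F n (by omega), Eb_mul_Eb_of_ne F n (by omega)]
  abel

theorem longRootNil_mul_neg_mul (hpq : p.natAbs ≠ q.natAbs) (hpn : p.natAbs ≤ n)
    (hqn : q.natAbs ≤ n) :
    longRootNil F n p q * longRootNil F n (-p) (-q) * longRootNil F n p q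
      = -longRootNil F n p q := by
  rw [longRootNil_mul_neg hpq hpn hqn]
  simp only [longRootNil, neg_mul, add_mul, mul_sub]
  rw [Eb_mul_Eb_self F n (by omega), Eb_mul_Eb_of_ne F n (by omega),
    Eb_mul_Eb_of_ne F n (by omega), Eb_mul_Eb_self F n (by omega)]
  abel

theorem longRootNil_weyl (hp : p ≠ 0) (hq : q ≠ 0) (hpq : p.natAbs ≠ q.natAbs)
    (hpn : p.natAbs ≤ n) (hqn : q.natAbs ≤ n) {c : F} (hc : c ≠ 0) :
    (1 + c • longRootNil F n p q) * (1 + c⁻¹ • longRootNil F n (-p) (-q))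
        * (1 + c • longRootNil F n p q)
      = 1 + c • longRootNil F n p q + c⁻¹ • longRootNil F n (-p) (-q)
          - Eb F n p p - Eb F n q q - Eb F n (-q) (-q) - Eb F n (-p) (-p) := by
  have hYX : longRootNil F n (-p) (-q) * longRootNil F n p q
      = -(Eb F n (-p) (-p) + Eb F n (-q) (-q)) := by
    simpa only [neg_neg] using
      longRootNil_mul_neg (F := F) (p := -p) (q := -q) (by omega) (by omega) (by omega)
  have hXX : (c • longRootNil F n p q) * (c • longRootNil F n p q) = 0 := by
    rw [smul_mul_smul_comm, longRootNil_mul_self hp hq hpq, smul_zero]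
  have hXYX : (c • longRootNil F n p q) * (c⁻¹ • longRootNil F n (-p) (-q))
      * (c • longRootNil F n p q) = -(c • longRootNil F n p q) := by
    rw [smul_mul_smul_comm, smul_mul_smul_comm, mul_inv_cancel₀ hc, one_mul,
      longRootNil_mul_neg_mul hpq hpn hqn, smul_neg]
  rw [one_add_mul_one_add_mul_one_add_of_mul_self_eq_zero hXX hXYX, smul_mul_smul_comm,
    smul_mul_smul_comm, mul_inv_cancel₀ hc, inv_mul_cancel₀ hc, one_smul, one_smul,
    longRootNil_mul_neg hpq hpn hqn, hYX]
  abel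

end MatrixUnits

theorem Lb_eq_one_add_smul_longRootNil (F : Type*) [Field F] (n : ℕ) (a b i j : ℤ) (t : F) :
    Lb F n a b i j t = 1 + ((a : F) * t) • longRootNil F n (a * i) (b * j) := by
  rw [Lb, longRootNil, smul_sub, add_sub_assoc]

theorem typeB_g_formula_general (F : Type*) [Field F] (n : ℕ)
    (a b : ℤ) (ha : a = 1 ∨ a = -1) (hb : b = 1 ∨ b = -1)
    (i j : ℤ) (hi1 : 1 ≤ i) (hin : i ≤ (n : ℤ)) (hj1 : 1 ≤ j) (hjn : j ≤ (n : ℤ))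
    (hij : i ≠ j) (t : F) (ht : t ≠ 0) :
    gB F n a b i j t
      = 1 + ((a : F) * t) • Eb F n (a * i) (-(b * j))
          - ((a : F) * t) • Eb F n (b * j) (-(a * i))
          + ((a : F) * t⁻¹) • Eb F n (-(a * i)) (b * j)
          - ((a : F) * t⁻¹) • Eb F n (-(b * j)) (a * i)
          - Eb F n (a * i) (a * i) - Eb F n (b * j) (b * j)
          - Eb F n (-(b * j)) (-(b * j)) - Eb F n (-(a * i)) (-(a * i)) := by
  have ha_abs : a.natAbs = 1 := by omega
  have hb_abs : b.natAbs = 1 := by omega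
  have hp : (a * i).natAbs = i.natAbs := by rw [Int.natAbs_mul, ha_abs, one_mul]
  have hq : (b * j).natAbs = j.natAbs := by rw [Int.natAbs_mul, hb_abs, one_mul]
  have hinv : (-(a : F)) * -t⁻¹ = ((a : F) * t)⁻¹ := by
    rcases ha with rfl | rfl <;> simp [mul_comm]
  have hc : (a : F) * t ≠ 0 := mul_ne_zero (by rcases ha with rfl | rfl <;> simp) ht
  rw [gB, Lb_eq_one_add_smul_longRootNil, Lb_eq_one_add_smul_longRootNil, Int.cast_neg, hinv,
    neg_mul, neg_mul, longRootNil_weyl (by omega) (by omega) (by omega) (by omega) (by omega) hc,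
    longRootNil, longRootNil, neg_neg, neg_neg, ← hinv, neg_mul_neg, smul_sub, smul_sub]
  abel

/-- For `i ≠ j` and nonzero `t`,
`g_{ai,bj}(t) = I + at·E_{ai,−bj} − at·E_{bj,−ai} + at⁻¹·E_{−ai,bj} − at⁻¹·E_{−bj,ai}
  − E_{ai,ai} − E_{bj,bj} − E_{−bj,−bj} − E_{−ai,−ai}`. -/
theorem typeB_g_formula (F : Type*) [Field F] (n : ℕ) (hn : 1 ≤ n)
    (a b : ℤ) (ha : a = 1 ∨ a = -1) (hb : b = 1 ∨ b = -1)
    (i j : ℤ) (hi1 : 1 ≤ i) (hin : i ≤ (n : ℤ)) (hj1 : 1 ≤ j) (hjn : j ≤ (n : ℤ))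
    (hij : i ≠ j) (t : F) (ht : t ≠ 0) :
    gB F n a b i j t
      = 1 + ((a : F) * t) • Eb F n (a * i) (-(b * j))
          - ((a : F) * t) • Eb F n (b * j) (-(a * i))
          + ((a : F) * t⁻¹) • Eb F n (-(a * i)) (b * j)
          - ((a : F) * t⁻¹) • Eb F n (-(b * j)) (a * i)
          - Eb F n (a * i) (a * i) - Eb F n (b * j) (b * j)
          - Eb F n (-(b * j)) (-(b * j)) - Eb F n (-(a * i)) (-(a * i)) :=
  typeB_g_formula_general F n a b ha hb i j hi1 hin hj1 hjn hij t ht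
end
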